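/- arXiv:1604.02187 — 5 statements merged into one kernel-verified Lean document; each statement's English description precedes it below -/
import Mathlib

section
/- First Korn inequality: for any vector field v ∈ [H₀¹(Ω)]² on a bounded domain Ω ⊂ ℝ², one has 2‖ε(v)‖²_{L²(Ω)} ≥ ‖∇v‖²_{L²(Ω)}, where ε(v) = (∇v + (∇v)ᵀ)/2. -/
/-!
Pointwise, `2 |ε(v)|² = |∇v|² + (div v)² - 2 det ∇v`, so it suffices that the Jacobian
determinant integrates to zero (it is a null Lagrangian). Integrating by parts twice and using the
symmetry of second derivatives gives `∫ ∂₀v₀ ∂₁v₁ = ∫ ∂₁v₀ ∂₀v₁` for compactly supported `v`.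
-/

open MeasureTheory

noncomputable section

abbrev V2 := EuclideanSpace ℝ (Fin 2)

def e2 (j : Fin 2) : V2 := EuclideanSpace.single j 1

def pd (f : V2 → ℝ) (j : Fin 2) (x : V2) : ℝ := fderiv ℝ f x (e2 j)

/-- the Jacobian entry `(∇v)_{jk} = ∂v_j/∂x_k` -/
def grad (v : V2 → V2) (x : V2) (j k : Fin 2) : ℝ := pd (fun y => v y j) k x

/-- the symmetric gradient `ε(v)_{jk}` -/
def epsF (v : V2 → V2) (j k : Fin 2) : V2 → ℝ :=
  fun x => (grad v x j k + grad v x k j) / 2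

section SecondDerivatives

variable {E F : Type*} [NormedAddCommGroup E] [NormedSpace ℝ E]
  [NormedAddCommGroup F] [NormedSpace ℝ F]

theorem fderiv_fderiv_apply_const {f : E → F} {x : E}
    (hf : DifferentiableAt ℝ (fderiv ℝ f) x) (u w : E) :
    fderiv ℝ (fderiv ℝ f · w) x u = fderiv ℝ (fderiv ℝ f) x u w := by
  simp [fderiv_clm_apply hf (differentiableAt_const w)]

theorem ContDiff.fderiv_fderiv_apply_comm {f : E → F} (hf : ContDiff ℝ 2 f) (x u w : E) :
    fderiv ℝ (fderiv ℝ f · w) x u = fderiv ℝ (fderiv ℝ f · u) x w := by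
  have hdiff : DifferentiableAt ℝ (fderiv ℝ f) x :=
    ((hf.fderiv_right le_rfl).differentiable one_ne_zero).differentiableAt
  rw [fderiv_fderiv_apply_const hdiff, fderiv_fderiv_apply_const hdiff,
    (hf.contDiffAt.isSymmSndFDerivAt (by simp)).eq]

theorem ContDiff.fderiv_apply_const {f : E → F} (hf : ContDiff ℝ 2 f) (w : E) :
    ContDiff ℝ 1 (fderiv ℝ f · w) :=
  (hf.fderiv_right le_rfl).clm_apply contDiff_const

end SecondDerivatives

section IntegrationByParts

variable {E : Type*} [NormedAddCommGroup E] [NormedSpace ℝ E] [FiniteDimensional ℝ E]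
  [MeasurableSpace E] [BorelSpace E] {μ : Measure E} [μ.IsAddHaarMeasure]

theorem integral_mul_fderiv_eq_neg_fderiv_mul_of_hasCompactSupport {f g : E → ℝ}
    (hf : ContDiff ℝ 1 f) (hfs : HasCompactSupport f) (hg : ContDiff ℝ 1 g) (u : E) :
    ∫ x, f x * fderiv ℝ g x u ∂μ = - ∫ x, fderiv ℝ f x u * g x ∂μ :=
  integral_mul_fderiv_eq_neg_fderiv_mul_of_integrable
    ((((hf.continuous_fderiv one_ne_zero).clm_apply continuous_const).mul
      hg.continuous).integrable_of_hasCompactSupport (hfs.fderiv_apply ℝ u).mul_right)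
    ((hf.continuous.mul ((hg.continuous_fderiv one_ne_zero).clm_apply
      continuous_const)).integrable_of_hasCompactSupport hfs.mul_right)
    ((hf.continuous.mul hg.continuous).integrable_of_hasCompactSupport hfs.mul_right)
    (fun _ _ => (hf.differentiable one_ne_zero).differentiableAt)
    (fun _ _ => (hg.differentiable one_ne_zero).differentiableAt)

theorem integral_fderiv_mul_fderiv_comm {f g : E → ℝ} (hf : ContDiff ℝ 1 f)
    (hfs : HasCompactSupport f) (hg : ContDiff ℝ 2 g) (u w : E) :
    ∫ x, fderiv ℝ f x u * fderiv ℝ g x w ∂μ = ∫ x, fderiv ℝ f x w * fderiv ℝ g x u ∂μ := by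
  calc ∫ x, fderiv ℝ f x u * fderiv ℝ g x w ∂μ
      = - ∫ x, f x * fderiv ℝ (fderiv ℝ g · w) x u ∂μ := by
        rw [integral_mul_fderiv_eq_neg_fderiv_mul_of_hasCompactSupport hf hfs
          (hg.fderiv_apply_const w), neg_neg]
    _ = - ∫ x, f x * fderiv ℝ (fderiv ℝ g · u) x w ∂μ := by
        simp_rw [hg.fderiv_fderiv_apply_comm]
    _ = ∫ x, fderiv ℝ f x w * fderiv ℝ g x u ∂μ := by
        rw [integral_mul_fderiv_eq_neg_fderiv_mul_of_hasCompactSupport hf hfs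
          (hg.fderiv_apply_const u), neg_neg]

end IntegrationByParts

def divergence2 (v : V2 → V2) (x : V2) : ℝ := grad v x 0 0 + grad v x 1 1

def jacobianDet2 (v : V2 → V2) (x : V2) : ℝ :=
  grad v x 0 0 * grad v x 1 1 - grad v x 0 1 * grad v x 1 0

theorem two_mul_sum_epsF_sq (v : V2 → V2) (x : V2) :
    2 * ∑ j, ∑ k, epsF v j k x ^ 2 =
      ∑ j, ∑ k, grad v x j k ^ 2 + divergence2 v x ^ 2 - 2 * jacobianDet2 v x := by
  simp only [Fin.sum_univ_two, epsF, divergence2, jacobianDet2]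
  ring

theorem grad_eq_zero_of_notMem_tsupport {v : V2 → V2} {x : V2} (hx : x ∉ tsupport v)
    (j k : Fin 2) : grad v x j k = 0 := by
  have hxj : x ∉ tsupport (fun y => v y j) := fun h =>
    hx (tsupport_comp_subset (g := fun w : V2 => w j) rfl v h)
  simp [grad, pd, fderiv_of_notMem_tsupport ℝ hxj]

theorem continuous_grad {v : V2 → V2} (hv : ContDiff ℝ 1 v) : Continuous (grad v) := by
  refine continuous_pi fun j => continuous_pi fun k => ?_
  exact ((contDiff_euclidean.1 hv j).continuous_fderiv one_ne_zero).clm_apply continuous_const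

theorem integrable_comp_grad {v : V2 → V2} (hv : ContDiff ℝ 1 v) (hs : HasCompactSupport v)
    {Φ : (Fin 2 → Fin 2 → ℝ) → ℝ} (hΦ : Continuous Φ) (hΦ0 : Φ 0 = 0) :
    Integrable (fun x => Φ (grad v x)) := by
  refine (hΦ.comp (continuous_grad hv)).integrable_of_hasCompactSupport
    (HasCompactSupport.intro hs fun x hx => ?_)
  have : grad v x = 0 := funext₂ (grad_eq_zero_of_notMem_tsupport hx)
  simp [this, hΦ0]

theorem integral_jacobianDet2_eq_zero {v : V2 → V2} (hv : ContDiff ℝ 2 v)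
    (hs : HasCompactSupport v) : ∫ x, jacobianDet2 v x = 0 := by
  have hv1 : ContDiff ℝ 1 v := hv.of_le one_le_two
  have hcomm : ∫ x, grad v x 0 0 * grad v x 1 1 = ∫ x, grad v x 0 1 * grad v x 1 0 :=
    integral_fderiv_mul_fderiv_comm (contDiff_euclidean.1 hv1 0)
      (hs.comp_left (g := fun w : V2 => w 0) rfl) (contDiff_euclidean.1 hv 1) _ _
  unfold jacobianDet2
  rw [integral_sub, hcomm, sub_self]
  · exact integrable_comp_grad hv1 hs (Φ := fun G => G 0 0 * G 1 1) (by fun_prop) (by simp)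
  · exact integrable_comp_grad hv1 hs (Φ := fun G => G 0 1 * G 1 0) (by fun_prop) (by simp)

theorem two_mul_integral_sum_epsF_sq {v : V2 → V2} (hv : ContDiff ℝ 2 v)
    (hs : HasCompactSupport v) :
    2 * ∫ x, ∑ j, ∑ k, epsF v j k x ^ 2 =
      (∫ x, ∑ j, ∑ k, grad v x j k ^ 2) + ∫ x, divergence2 v x ^ 2 := by
  have hv1 : ContDiff ℝ 1 v := hv.of_le one_le_two
  have hsq : Integrable fun x => ∑ j, ∑ k, grad v x j k ^ 2 :=
    integrable_comp_grad hv1 hs (Φ := fun G => ∑ j, ∑ k, G j k ^ 2) (by fun_prop) (by simp)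
  have hdiv : Integrable fun x => divergence2 v x ^ 2 :=
    integrable_comp_grad hv1 hs (Φ := fun G => (G 0 0 + G 1 1) ^ 2) (by fun_prop) (by simp)
  have hdet : Integrable fun x => jacobianDet2 v x :=
    integrable_comp_grad hv1 hs (Φ := fun G => G 0 0 * G 1 1 - G 0 1 * G 1 0)
      (by fun_prop) (by simp)
  rw [← integral_const_mul]
  simp_rw [two_mul_sum_epsF_sq]
  rw [integral_sub (hsq.fun_add hdiv) (hdet.const_mul 2), integral_add hsq hdiv,
    integral_const_mul, integral_jacobianDet2_eq_zero hv hs, mul_zero, sub_zero]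

theorem stmt2_general (Ω : Set V2)
    (v : V2 → V2) (hv : ContDiff ℝ (⊤ : ℕ∞) v)
    (hsupp : HasCompactSupport v) (hin : tsupport v ⊆ Ω) :
    (∫ x in Ω, ∑ j, ∑ k, (grad v x j k) ^ 2) ≤
      2 * ∫ x in Ω, ∑ j, ∑ k, (epsF v j k x) ^ 2 := by
  have hgrad0 (x : V2) (hx : x ∉ Ω) : grad v x = 0 :=
    funext₂ (grad_eq_zero_of_notMem_tsupport fun h => hx (hin h))
  rw [setIntegral_eq_integral_of_forall_compl_eq_zero fun x hx => by simp [hgrad0 x hx],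
    setIntegral_eq_integral_of_forall_compl_eq_zero fun x hx => by simp [epsF, hgrad0 x hx],
    two_mul_integral_sum_epsF_sq (hv.of_le (WithTop.coe_le_coe.mpr le_top)) hsupp]
  exact le_add_of_nonneg_right (integral_nonneg fun x => sq_nonneg _)

/-- First Korn inequality: for a bounded domain `Ω ⊆ ℝ²` and `v ∈ [H₀¹(Ω)]²`
(stated for smooth vector fields compactly supported in `Ω`, which are dense in `H₀¹`),
`2‖ε(v)‖²_{L²(Ω)} ≥ ‖∇v‖²_{L²(Ω)}`. -/
theorem stmt2 (Ω : Set V2) (hΩo : IsOpen Ω) (hΩb : Bornology.IsBounded Ω)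
    (v : V2 → V2) (hv : ContDiff ℝ (⊤ : ℕ∞) v)
    (hsupp : HasCompactSupport v) (hin : tsupport v ⊆ Ω) :
    (∫ x in Ω, ∑ j, ∑ k, (grad v x j k) ^ 2) ≤
      2 * ∫ x in Ω, ∑ j, ∑ k, (epsF v j k x) ^ 2 :=
  stmt2_general Ω v hv hsupp hin
end
end

section
/- Coercivity of the strain gradient bilinear form: let a(u,v) = (ℂε(u), ε(v)) + (𝔻∇ε(u), ∇ε(v)) with ℂ_{ijkl} = λδ_{ij}δ_{kl} + 2μδ_{ik}δ_{jl} and 𝔻_{ijklmn} = ι²(λδ_{il}δ_{jk}δ_{mn} + 2μδ_{il}δ_{jm}δ_{ln}), where λ ≥ 0, μ > 0, 0 < ι ≤ 1. Then for all v ∈ [H₀²(Ω)]², a(v,v) ≥ μ(|v|²_{H¹} + ι²|v|²_{H²}), and consequently there exists C(Ω) > 0 depending only on μ and the Poincaré constant of Ω such that a(v,v) ≥ C(Ω)(‖v‖²_{H¹} + ι²|v|²_{H²}). -/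
/-!
Integrating by parts twice gives `∫ ∂ₖwⱼ ∂ⱼwₖ = ∫ ∂ⱼwⱼ ∂ₖwₖ` for smooth compactly supported `w`,
hence `2‖ε(w)‖² = ‖∇w‖² + ‖∇·w‖² ≥ ‖∇w‖²` (Korn). Applied to `v` and, since second derivatives
commute, to each `∂ᵢv`, this bounds the first- and second-order parts of `a(v,v)` from below by
`μ|v|²_{H¹}` and `μ|v|²_{H²}`, the `λ`-terms being nonnegative. With Poincaré,
`‖v‖²_{L²} ≤ C_p²|v|²_{H¹}`, so `C = μ / (1 + C_p²)` works for the full `H¹` norm.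
-/

open MeasureTheory

noncomputable section

def divF (v : V2 → V2) : V2 → ℝ := fun x => ∑ j, grad v x j j

/-- the strain gradient energy
`a(v,v) = 2μ‖ε(v)‖² + λ‖∇·v‖² + ι²(2μ‖∇ε(v)‖² + λ‖∇(∇·v)‖²)`, i.e.
`(ℂε(v),ε(v)) + (𝔻∇ε(v),∇ε(v))` for the tensors
`ℂ_{ijkl} = λδ_{ij}δ_{kl} + 2μδ_{ik}δ_{jl}`,
`𝔻_{ijklmn} = ι²(λδ_{il}δ_{jk}δ_{mn} + 2μδ_{il}δ_{jm}δ_{ln})`. -/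
def aForm (lam mu iot : ℝ) (Ω : Set V2) (v : V2 → V2) : ℝ :=
  (∫ x in Ω, (2 * mu * ∑ j, ∑ k, (epsF v j k x) ^ 2 + lam * (divF v x) ^ 2)) +
    iot ^ 2 *
      ∫ x in Ω, (2 * mu * ∑ i, ∑ j, ∑ k, (pd (epsF v j k) i x) ^ 2 +
        lam * ∑ i, (pd (divF v) i x) ^ 2)

/-- the squared `L²` norm of `v` -/
def L2sq (Ω : Set V2) (v : V2 → V2) : ℝ := ∫ x in Ω, ∑ j, (v x j) ^ 2

/-- the squared `H¹` seminorm `|v|²_{H¹}` -/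
def semi1 (Ω : Set V2) (v : V2 → V2) : ℝ := ∫ x in Ω, ∑ j, ∑ k, (grad v x j k) ^ 2

/-- the squared `H²` seminorm `|v|²_{H²}` -/
def semi2 (Ω : Set V2) (v : V2 → V2) : ℝ :=
  ∫ x in Ω, ∑ i, ∑ j, ∑ k, (pd (fun y => grad v y k j) i x) ^ 2

section PartialDerivative

variable {f g : V2 → ℝ}

lemma pd_eq_zero_of_notMem_tsupport {x : V2} (hx : x ∉ tsupport f) (j : Fin 2) :
    pd f j x = 0 := by
  simp [pd, fderiv_of_notMem_tsupport ℝ hx]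

lemma tsupport_pd_subset (f : V2 → ℝ) (j : Fin 2) : tsupport (pd f j) ⊆ tsupport f :=
  tsupport_fderiv_apply_subset ℝ (e2 j)

protected lemma HasCompactSupport.pd (hf : HasCompactSupport f) (j : Fin 2) :
    HasCompactSupport (pd f j) :=
  hf.fderiv_apply ℝ (e2 j)

protected lemma ContDiff.pd (hf : ContDiff ℝ (⊤ : ℕ∞) f) (j : Fin 2) :
    ContDiff ℝ (⊤ : ℕ∞) (pd f j) :=
  (hf.fderiv_right le_rfl).clm_apply contDiff_const

lemma pd_pd_comm (hf : ContDiff ℝ (⊤ : ℕ∞) f) (j k : Fin 2) (x : V2) :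
    pd (pd f j) k x = pd (pd f k) j x := by
  have hd : DifferentiableAt ℝ (fderiv ℝ f) x :=
    (hf.fderiv_right (m := (⊤ : ℕ∞)) le_rfl).differentiable (by simp) x
  have hsymm : IsSymmSndFDerivAt ℝ f x :=
    hf.contDiffAt.isSymmSndFDerivAt (by
      simp [minSmoothness_of_isRCLikeNormedField, ← WithTop.coe_ofNat, WithTop.coe_le_coe])
  have hpd2 (j k : Fin 2) : pd (pd f j) k x = fderiv ℝ (fderiv ℝ f) x (e2 k) (e2 j) := by
    change fderiv ℝ (fun y => fderiv ℝ f y (e2 j)) x (e2 k) = _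
    simp [fderiv_clm_apply hd (differentiableAt_const _)]
  rw [hpd2, hpd2, hsymm]

lemma pd_fun_add {x : V2} (hf : DifferentiableAt ℝ f x) (hg : DifferentiableAt ℝ g x)
    (j : Fin 2) : pd (fun y => f y + g y) j x = pd f j x + pd g j x := by
  simp [pd, fderiv_fun_add hf hg]

lemma pd_fun_div_const {x : V2} (hf : DifferentiableAt ℝ f x) (c : ℝ) (j : Fin 2) :
    pd (fun y => f y / c) j x = pd f j x / c := by
  simp [pd, div_eq_mul_inv, fderiv_mul_const hf c⁻¹, mul_comm]

lemma pd_fun_sum {ι : Type*} {s : Finset ι} {f : ι → V2 → ℝ} {x : V2}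
    (hf : ∀ i ∈ s, DifferentiableAt ℝ (f i) x) (j : Fin 2) :
    pd (fun y => ∑ i ∈ s, f i y) j x = ∑ i ∈ s, pd (f i) j x := by
  simp [pd, fderiv_fun_sum hf]

lemma integral_mul_pd_eq_neg (hf : ContDiff ℝ (⊤ : ℕ∞) f) (hfs : HasCompactSupport f)
    (hg : ContDiff ℝ (⊤ : ℕ∞) g) (j : Fin 2) :
    ∫ x, f x * pd g j x = - ∫ x, pd f j x * g x :=
  integral_mul_fderiv_eq_neg_fderiv_mul_of_integrable
    (((hf.pd j).continuous.mul hg.continuous).integrable_of_hasCompactSupport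
      (hfs.pd j).mul_right)
    ((hf.continuous.mul (hg.pd j).continuous).integrable_of_hasCompactSupport hfs.mul_right)
    ((hf.continuous.mul hg.continuous).integrable_of_hasCompactSupport hfs.mul_right)
    (fun x _ => hf.differentiable (by simp) x) (fun x _ => hg.differentiable (by simp) x)

lemma integral_pd_mul_pd_comm (hf : ContDiff ℝ (⊤ : ℕ∞) f) (hfs : HasCompactSupport f)
    (hg : ContDiff ℝ (⊤ : ℕ∞) g) (j k : Fin 2) :
    ∫ x, pd f k x * pd g j x = ∫ x, pd f j x * pd g k x := by
  have hk := integral_mul_pd_eq_neg hf hfs (hg.pd j) k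
  have hj := integral_mul_pd_eq_neg hf hfs (hg.pd k) j
  simp_rw [pd_pd_comm hg j k] at hk
  linarith

end PartialDerivative

lemma two_mul_sum_sum_symm_half_sq {ι : Type*} [Fintype ι] (a : ι → ι → ℝ) :
    2 * ∑ j, ∑ k, ((a j k + a k j) / 2) ^ 2 =
      ∑ j, ∑ k, a j k ^ 2 + ∑ j, ∑ k, a j k * a k j := by
  have hexpand (j k : ι) : ((a j k + a k j) / 2) ^ 2 =
      a j k ^ 2 / 4 + a k j ^ 2 / 4 + a j k * a k j / 2 := by ring
  have hswap : ∑ j, ∑ k, a k j ^ 2 = ∑ j, ∑ k, a j k ^ 2 := Finset.sum_comm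
  simp only [hexpand, Finset.sum_add_distrib, ← Finset.sum_div, hswap]
  ring

section Korn

variable {w : Fin 2 → V2 → ℝ}

lemma integrable_of_forall_pd_eq_zero (hws : ∀ j, HasCompactSupport (w j)) {F : V2 → ℝ}
    (hF : Continuous F) (hF0 : ∀ x, (∀ j k, pd (w j) k x = 0) → F x = 0) : Integrable F :=
  hF.integrable_of_hasCompactSupport <| HasCompactSupport.intro (isCompact_iUnion hws)
    fun x hx => hF0 x fun j k => pd_eq_zero_of_notMem_tsupport (fun h => hx ⟨_, ⟨j, rfl⟩, h⟩) k

lemma integral_sum_pd_mul_pd_eq_integral_sq (hw : ∀ j, ContDiff ℝ (⊤ : ℕ∞) (w j))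
    (hws : ∀ j, HasCompactSupport (w j)) :
    ∫ x, ∑ j, ∑ k, pd (w j) k x * pd (w k) j x = ∫ x, (∑ j, pd (w j) j x) ^ 2 := by
  have hc (j k : Fin 2) : Continuous (pd (w j) k) := ((hw j).pd k).continuous
  have hint (j k l m : Fin 2) : Integrable fun x => pd (w j) k x * pd (w l) m x :=
    integrable_of_forall_pd_eq_zero hws (by fun_prop) fun x h => by simp [h]
  simp_rw [sq, Finset.sum_mul_sum]
  rw [integral_finsetSum _ fun j _ => integrable_finsetSum _ fun k _ => hint _ _ _ _,
    integral_finsetSum _ fun j _ => integrable_finsetSum _ fun k _ => hint _ _ _ _]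
  refine Finset.sum_congr rfl fun j _ => ?_
  rw [integral_finsetSum _ fun k _ => hint _ _ _ _, integral_finsetSum _ fun k _ => hint _ _ _ _]
  exact Finset.sum_congr rfl fun k _ => integral_pd_mul_pd_comm (hw j) (hws j) (hw k) j k

theorem integral_sum_pd_sq_le_two_mul (hw : ∀ j, ContDiff ℝ (⊤ : ℕ∞) (w j))
    (hws : ∀ j, HasCompactSupport (w j)) :
    ∫ x, ∑ j, ∑ k, pd (w j) k x ^ 2 ≤
      2 * ∫ x, ∑ j, ∑ k, ((pd (w j) k x + pd (w k) j x) / 2) ^ 2 := by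
  have hc (j k : Fin 2) : Continuous (pd (w j) k) := ((hw j).pd k).continuous
  have hint {F : V2 → ℝ} (hF : Continuous F) (hF0 : ∀ x, (∀ j k, pd (w j) k x = 0) → F x = 0) :
      Integrable F := integrable_of_forall_pd_eq_zero hws hF hF0
  simp_rw [← integral_const_mul, two_mul_sum_sum_symm_half_sq fun j k => pd (w j) k _]
  rw [integral_add (hint (by fun_prop) fun x h => by simp [h])
    (hint (by fun_prop) fun x h => by simp [h]), integral_sum_pd_mul_pd_eq_integral_sq hw hws]
  have hdiv : 0 ≤ ∫ x, (∑ j, pd (w j) j x) ^ 2 := integral_nonneg fun x => sq_nonneg _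
  linarith

theorem mul_setIntegral_sum_pd_sq_le {Ω : Set V2} (hw : ∀ j, ContDiff ℝ (⊤ : ℕ∞) (w j))
    (hws : ∀ j, HasCompactSupport (w j)) (hwΩ : ∀ j, tsupport (w j) ⊆ Ω) {lam mu : ℝ}
    (hlam : 0 ≤ lam) (hmu : 0 ≤ mu) :
    mu * ∫ x in Ω, ∑ j, ∑ k, pd (w j) k x ^ 2 ≤
      ∫ x in Ω, (2 * mu * ∑ j, ∑ k, ((pd (w j) k x + pd (w k) j x) / 2) ^ 2 +
        lam * (∑ j, pd (w j) j x) ^ 2) := by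
  have hc (j k : Fin 2) : Continuous (pd (w j) k) := ((hw j).pd k).continuous
  have hint {F : V2 → ℝ} (hF : Continuous F) (hF0 : ∀ x, (∀ j k, pd (w j) k x = 0) → F x = 0) :
      Integrable F := integrable_of_forall_pd_eq_zero hws hF hF0
  have hvan (x : V2) (hx : x ∉ Ω) (j k : Fin 2) : pd (w j) k x = 0 :=
    pd_eq_zero_of_notMem_tsupport (fun h => hx (hwΩ j h)) k
  rw [setIntegral_eq_integral_of_forall_compl_eq_zero fun x hx => by simp [hvan x hx],
    setIntegral_eq_integral_of_forall_compl_eq_zero fun x hx => by simp [hvan x hx],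
    integral_add (hint (by fun_prop) fun x h => by simp [h])
      (hint (by fun_prop) fun x h => by simp [h]),
    integral_const_mul, integral_const_mul]
  have hkorn := mul_le_mul_of_nonneg_left (integral_sum_pd_sq_le_two_mul hw hws) hmu
  have hdiv : 0 ≤ ∫ x, (∑ j, pd (w j) j x) ^ 2 := integral_nonneg fun x => sq_nonneg _
  linarith [mul_nonneg hlam hdiv]

end Korn

section VectorField

variable {v : V2 → V2} {Ω : Set V2}

lemma pd_epsF (hv : ∀ j, ContDiff ℝ (⊤ : ℕ∞) fun y => v y j) (i j k : Fin 2) (x : V2) :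
    pd (epsF v j k) i x =
      (pd (pd (fun y => v y j) i) k x + pd (pd (fun y => v y k) i) j x) / 2 := by
  have hd (j k : Fin 2) : DifferentiableAt ℝ (pd (fun y => v y j) k) x :=
    ((hv j).pd k).differentiable (by simp) x
  change pd (fun y => (pd (fun z => v z j) k y + pd (fun z => v z k) j y) / 2) i x = _
  rw [pd_fun_div_const ((hd j k).fun_add (hd k j)), pd_fun_add (hd j k) (hd k j),
    pd_pd_comm (hv j), pd_pd_comm (hv k)]

lemma pd_divF (hv : ∀ j, ContDiff ℝ (⊤ : ℕ∞) fun y => v y j) (i : Fin 2) (x : V2) :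
    pd (divF v) i x = ∑ j, pd (pd (fun y => v y j) i) j x := by
  change pd (fun y => ∑ j, pd (fun z => v z j) j y) i x = _
  rw [pd_fun_sum fun j _ => ((hv j).pd j).differentiable (by simp) x]
  exact Finset.sum_congr rfl fun j _ => pd_pd_comm (hv j) j i x

lemma mul_semi1_le (hv : ∀ j, ContDiff ℝ (⊤ : ℕ∞) fun y => v y j)
    (hvs : ∀ j, HasCompactSupport fun y => v y j) (hvΩ : ∀ j, tsupport (fun y => v y j) ⊆ Ω)
    {lam mu : ℝ} (hlam : 0 ≤ lam) (hmu : 0 ≤ mu) :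
    mu * semi1 Ω v ≤ ∫ x in Ω, (2 * mu * ∑ j, ∑ k, (epsF v j k x) ^ 2 + lam * (divF v x) ^ 2) :=
  mul_setIntegral_sum_pd_sq_le hv hvs hvΩ hlam hmu

lemma mul_semi2_le (hv : ∀ j, ContDiff ℝ (⊤ : ℕ∞) fun y => v y j)
    (hvs : ∀ j, HasCompactSupport fun y => v y j) (hvΩ : ∀ j, tsupport (fun y => v y j) ⊆ Ω)
    {lam mu : ℝ} (hlam : 0 ≤ lam) (hmu : 0 ≤ mu) :
    mu * semi2 Ω v ≤ ∫ x in Ω, (2 * mu * ∑ i, ∑ j, ∑ k, (pd (epsF v j k) i x) ^ 2 +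
        lam * ∑ i, (pd (divF v) i x) ^ 2) := by
  set w : Fin 2 → Fin 2 → V2 → ℝ := fun i j => pd (fun y => v y j) i
  have hw (i j : Fin 2) : ContDiff ℝ (⊤ : ℕ∞) (w i j) := (hv j).pd i
  have hws (i j : Fin 2) : HasCompactSupport (w i j) := (hvs j).pd i
  have hwΩ (i j : Fin 2) : tsupport (w i j) ⊆ Ω := (tsupport_pd_subset _ i).trans (hvΩ j)
  have hc (i j k : Fin 2) : Continuous (pd (w i j) k) := ((hw i j).pd k).continuous
  have hsemi2 : semi2 Ω v = ∫ x in Ω, ∑ i, ∑ j, ∑ k, pd (w i j) k x ^ 2 := by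
    refine integral_congr_ae (ae_of_all _ fun x => Finset.sum_congr rfl fun i _ => ?_)
    rw [Finset.sum_comm]
    exact Finset.sum_congr rfl fun k _ => Finset.sum_congr rfl fun j _ => by
      simp only [grad, w, pd_pd_comm (hv k) j i x]
  have hform : ∫ x in Ω, (2 * mu * ∑ i, ∑ j, ∑ k, (pd (epsF v j k) i x) ^ 2 +
        lam * ∑ i, (pd (divF v) i x) ^ 2) =
      ∫ x in Ω, ∑ i, (2 * mu * ∑ j, ∑ k, ((pd (w i j) k x + pd (w i k) j x) / 2) ^ 2 +
        lam * (∑ j, pd (w i j) j x) ^ 2) := by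
    simp only [pd_epsF hv, pd_divF hv, Finset.mul_sum, Finset.sum_add_distrib, w]
  rw [hsemi2, hform, integral_finsetSum _ fun i _ => ?_, integral_finsetSum _ fun i _ => ?_,
    Finset.mul_sum]
  · exact Finset.sum_le_sum fun i _ =>
      mul_setIntegral_sum_pd_sq_le (hw i) (hws i) (hwΩ i) hlam hmu
  all_goals exact
    (integrable_of_forall_pd_eq_zero (hws i) (by fun_prop) fun x h => by simp [h]).integrableOn

lemma L2sq_le_semi1 (hv : ∀ j, ContDiff ℝ (⊤ : ℕ∞) fun y => v y j)
    (hvs : ∀ j, HasCompactSupport fun y => v y j) (hvΩ : ∀ j, tsupport (fun y => v y j) ⊆ Ω)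
    {Cp : ℝ} (hPoincare : ∀ f : V2 → ℝ, ContDiff ℝ (⊤ : ℕ∞) f → HasCompactSupport f →
      tsupport f ⊆ Ω → (∫ x in Ω, (f x) ^ 2) ≤ Cp ^ 2 * ∫ x in Ω, ∑ j, (pd f j x) ^ 2) :
    L2sq Ω v ≤ Cp ^ 2 * semi1 Ω v := by
  have hc (j k : Fin 2) : Continuous (pd (fun y => v y j) k) := ((hv j).pd k).continuous
  have hint_sq (j : Fin 2) : IntegrableOn (fun x => (v x j) ^ 2) Ω :=
    have hcont : Continuous fun x => (v x j) ^ 2 := (hv j).continuous.pow 2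
    have hsupp : HasCompactSupport fun x => (v x j) ^ 2 :=
      (hvs j).comp_left (g := fun t : ℝ => t ^ 2) (zero_pow two_ne_zero)
    (hcont.integrable_of_hasCompactSupport hsupp).integrableOn
  have hint_grad (j : Fin 2) : IntegrableOn (fun x => ∑ k, (grad v x j k) ^ 2) Ω :=
    (integrable_of_forall_pd_eq_zero hvs (by unfold grad; fun_prop)
      fun x h => by simp [grad, h]).integrableOn
  rw [L2sq, semi1, integral_finsetSum _ fun j _ => hint_sq j,
    integral_finsetSum _ fun j _ => hint_grad j, Finset.mul_sum]
  exact Finset.sum_le_sum fun j _ => hPoincare _ (hv j) (hvs j) (hvΩ j)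

end VectorField

theorem stmt4_general (Ω : Set V2)
    (lam mu iot Cp : ℝ) (hlam : 0 ≤ lam) (hmu : 0 < mu)
    (hPoincare : ∀ f : V2 → ℝ, ContDiff ℝ (⊤ : ℕ∞) f → HasCompactSupport f →
      tsupport f ⊆ Ω →
      (∫ x in Ω, (f x) ^ 2) ≤ Cp ^ 2 * ∫ x in Ω, ∑ j, (pd f j x) ^ 2) :
    ∃ C > 0, ∀ v : V2 → V2, ContDiff ℝ (⊤ : ℕ∞) v → HasCompactSupport v →
      tsupport v ⊆ Ω →
      mu * (semi1 Ω v + iot ^ 2 * semi2 Ω v) ≤ aForm lam mu iot Ω v ∧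
      C * ((L2sq Ω v + semi1 Ω v) + iot ^ 2 * semi2 Ω v) ≤ aForm lam mu iot Ω v := by
  refine ⟨mu / (1 + Cp ^ 2), by positivity, fun v hv hvs hvΩ => ?_⟩
  have hvj (j : Fin 2) : ContDiff ℝ (⊤ : ℕ∞) fun y => v y j := contDiff_euclidean.mp hv j
  have hvsj (j : Fin 2) : HasCompactSupport fun y => v y j :=
    hvs.comp_left (g := fun u : V2 => u j) rfl
  have hvΩj (j : Fin 2) : tsupport (fun y => v y j) ⊆ Ω :=
    (tsupport_comp_subset (g := fun u : V2 => u j) rfl v).trans hvΩ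
  have hcoercive : mu * (semi1 Ω v + iot ^ 2 * semi2 Ω v) ≤ aForm lam mu iot Ω v := by
    have h1 := mul_semi1_le hvj hvsj hvΩj hlam hmu.le
    have h2 := mul_le_mul_of_nonneg_left (mul_semi2_le hvj hvsj hvΩj hlam hmu.le) (sq_nonneg iot)
    rw [aForm]
    linarith
  refine ⟨hcoercive, ?_⟩
  have hL2 := L2sq_le_semi1 hvj hvsj hvΩj hPoincare
  have hsemi2 : 0 ≤ iot ^ 2 * semi2 Ω v :=
    mul_nonneg (sq_nonneg iot) (integral_nonneg fun x => by positivity)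
  have hnorm : (L2sq Ω v + semi1 Ω v) + iot ^ 2 * semi2 Ω v ≤
      (1 + Cp ^ 2) * (semi1 Ω v + iot ^ 2 * semi2 Ω v) := by
    linarith [mul_nonneg (sq_nonneg Cp) hsemi2]
  calc mu / (1 + Cp ^ 2) * ((L2sq Ω v + semi1 Ω v) + iot ^ 2 * semi2 Ω v)
      ≤ mu / (1 + Cp ^ 2) * ((1 + Cp ^ 2) * (semi1 Ω v + iot ^ 2 * semi2 Ω v)) := by
        gcongr
    _ = mu * (semi1 Ω v + iot ^ 2 * semi2 Ω v) := by field_simp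
    _ ≤ aForm lam mu iot Ω v := hcoercive

/-- Coercivity of the strain gradient bilinear form on `[H₀²(Ω)]²` (stated for smooth
vector fields compactly supported in `Ω`): `a(v,v) ≥ μ(|v|²_{H¹} + ι²|v|²_{H²})`, and
there is `C(Ω) > 0` depending only on `μ` and the Poincaré constant `C_p` such that
`a(v,v) ≥ C(Ω)(‖v‖²_{H¹} + ι²|v|²_{H²})`. -/
theorem stmt4 (Ω : Set V2) (hΩo : IsOpen Ω) (hΩb : Bornology.IsBounded Ω)
    (lam mu iot Cp : ℝ) (hlam : 0 ≤ lam) (hmu : 0 < mu) (hiot : 0 < iot ∧ iot ≤ 1)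
    (hCp : 0 < Cp)
    (hPoincare : ∀ f : V2 → ℝ, ContDiff ℝ (⊤ : ℕ∞) f → HasCompactSupport f →
      tsupport f ⊆ Ω →
      (∫ x in Ω, (f x) ^ 2) ≤ Cp ^ 2 * ∫ x in Ω, ∑ j, (pd f j x) ^ 2) :
    ∃ C > 0, ∀ v : V2 → V2, ContDiff ℝ (⊤ : ℕ∞) v → HasCompactSupport v →
      tsupport v ⊆ Ω →
      mu * (semi1 Ω v + iot ^ 2 * semi2 Ω v) ≤ aForm lam mu iot Ω v ∧
      C * ((L2sq Ω v + semi1 Ω v) + iot ^ 2 * semi2 Ω v) ≤ aForm lam mu iot Ω v :=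
  stmt4_general Ω lam mu iot Cp hlam hmu hPoincare
end
end

section
/- Discrete H² Korn inequality: let 𝒯_h be a shape-regular triangulation of a bounded polygon Ω ⊂ ℝ² and let v be a piecewise H² vector field. Then ‖v‖²_{H²_h} ≤ C(‖∇_h ε_h(v)‖²_{L²} + ‖ε_h(v)‖²_{L²} + ‖v‖²_{L²} + Σ_e h_e^{-1}‖[Π_e v]‖²_{L²(e)} + Σ_{i=1,2} Σ_e h_e^{-1}‖[Π_e(∂_i v)]‖²_{L²(e)}), where the sums run over all edges e, [·] denotes the jump across e, and Π_e is the L² projection onto P_{1,−}(e)², assuming the Mardal–Winther discrete H¹ Korn inequality |w|²_{H¹_h} ≤ C(‖ε_h(w)‖² + ‖w‖² + Σ_e h_e^{-1}‖[Π_e w]‖²_{L²(e)}) for piecewise H¹ fields w. -/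
/-! Apply the `H¹` Korn inequality to each `∂ᵢ v`. The `L²` norms of the `∂ᵢ v` that this
produces add up to `|v|²_{H¹_h}`, which the `H¹` Korn inequality applied to `v` itself bounds
in turn; this second application is where the constant `C₀²` comes from. -/

theorem sum_sq_le_of_korn {ι W : Type*} [Fintype ι] {C₀ : ℝ} {epsN L2N H1s jumpSq : W → ℝ}
    (hKorn : ∀ w, H1s w ^ 2 ≤ C₀ * (epsN w ^ 2 + L2N w ^ 2 + jumpSq w)) (u : ι → W) :
    ∑ i, H1s (u i) ^ 2 ≤
      C₀ * (∑ i, epsN (u i) ^ 2 + ∑ i, L2N (u i) ^ 2 + ∑ i, jumpSq (u i)) := by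
  simp only [← Finset.sum_add_distrib, Finset.mul_sum]
  exact Finset.sum_le_sum fun i _ => hKorn (u i)

theorem add_add_le_of_korn_bounds {C₀ ℓ h s X Y : ℝ} (hC₀ : 0 ≤ C₀) (hY : 0 ≤ Y)
    (hℓ : ℓ ≤ X) (hh : h ≤ C₀ * X) (hs : s ≤ C₀ * (Y + h)) :
    ℓ + h + s ≤ (1 + C₀ + C₀ ^ 2) * (Y + X) := by
  nlinarith [mul_le_mul_of_nonneg_left hh hC₀]

/-- Discrete `H²` Korn inequality (abstract form).  Here `W` stands for the space of
piecewise `H¹` vector fields on the triangulation `𝒯_h` and `V` for the piecewise `H²`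
fields; `emb` is the inclusion `V ↪ W`, `D i` is the elementwise partial derivative
`∂_i`, `epsN w = ‖ε_h(w)‖_{L²}`, `L2N w = ‖w‖_{L²}`, `H1s w = |w|_{H¹_h}`, and
`jumpSq w = Σ_e h_e⁻¹‖[Π_e w]‖²_{L²(e)}` with `Π_e` the `L²` projection onto
`P_{1,−}(e)²`.  Assuming the Mardal–Winther discrete `H¹` Korn inequality
`|w|²_{H¹_h} ≤ C₀(‖ε_h(w)‖² + ‖w‖² + jumpSq w)` for all piecewise `H¹` fields `w`,
and using that `ε_h` commutes with `∂_i` (so `‖∇_hε_h(v)‖² = Σ_i ‖ε_h(∂_i v)‖²` and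
`|v|²_{H¹_h} = Σ_i ‖∂_i v‖²_{L²}`), one gets for every piecewise `H²` field `v`:
`‖v‖²_{H²_h} ≤ C(‖∇_hε_h(v)‖² + ‖ε_h(v)‖² + ‖v‖²_{L²}
               + jumpSq v + Σ_i jumpSq (∂_i v))`. -/
theorem stmt8 (C₀ : ℝ) (hC₀ : 0 < C₀) :
    ∃ C > 0,
      ∀ (W V : Type) (emb : V → W) (D : Fin 2 → V → W)
        (epsN L2N H1s jumpSq : W → ℝ)
        (_ : ∀ w, 0 ≤ epsN w) (_ : ∀ w, 0 ≤ L2N w) (_ : ∀ w, 0 ≤ H1s w)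
        (_ : ∀ w, 0 ≤ jumpSq w)
        -- Mardal–Winther discrete H¹ Korn inequality
        (_ : ∀ w, (H1s w) ^ 2 ≤ C₀ * ((epsN w) ^ 2 + (L2N w) ^ 2 + jumpSq w))
        (v : V)
        -- `|v|²_{H¹_h} = Σ_i ‖∂_i v‖²_{L²}`
        (_ : (H1s (emb v)) ^ 2 = ∑ i, (L2N (D i v)) ^ 2),
        -- broken H² norm squared  ≤  C ( ‖∇_hε_h v‖² + ‖ε_h v‖² + ‖v‖² + jumps )
        (L2N (emb v)) ^ 2 + (H1s (emb v)) ^ 2 + (∑ i, (H1s (D i v)) ^ 2) ≤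
          C * ((∑ i, (epsN (D i v)) ^ 2) + (epsN (emb v)) ^ 2 + (L2N (emb v)) ^ 2 +
            jumpSq (emb v) + ∑ i, jumpSq (D i v)) := by
  refine ⟨1 + C₀ + C₀ ^ 2, by positivity, ?_⟩
  intro W V emb D epsN L2N H1s jumpSq _ _ _ hjump hKorn v hH1
  have hKorn_D := sum_sq_le_of_korn hKorn (fun i => D i v)
  rw [← hH1, add_right_comm] at hKorn_D
  have hY : 0 ≤ ∑ i, epsN (D i v) ^ 2 + ∑ i, jumpSq (D i v) :=
    add_nonneg (Finset.sum_nonneg fun i _ => sq_nonneg _) (Finset.sum_nonneg fun i _ => hjump _)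
  have hℓ : L2N (emb v) ^ 2 ≤ epsN (emb v) ^ 2 + L2N (emb v) ^ 2 + jumpSq (emb v) := by
    linarith [hjump (emb v), sq_nonneg (epsN (emb v))]
  calc _ ≤ (1 + C₀ + C₀ ^ 2) * ((∑ i, epsN (D i v) ^ 2 + ∑ i, jumpSq (D i v)) +
          (epsN (emb v) ^ 2 + L2N (emb v) ^ 2 + jumpSq (emb v))) :=
        add_add_le_of_korn_bounds hC₀.le hY hℓ (hKorn (emb v)) hKorn_D
    _ = _ := by ring
end

section
/- If w ∈ [P₂(T)]² ⊕ b·P₂*(T) vanishes at the three vertices and three edge midpoints of the triangle T, then w vanishes identically on ∂T, and hence w = b·p for some p ∈ P₂*(T). -/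
open MeasureTheory

noncomputable section

/-- Euclidean dot product on `ℝ²`. -/
def dot (u v : V2) : ℝ := ∑ j, u j * v j

/-- `f : ℝ² → ℝ` is a polynomial of total degree at most `k`. -/
def PolyDeg (k : ℕ) (f : V2 → ℝ) : Prop :=
  ∃ p : MvPolynomial (Fin 2) ℝ, p.totalDegree ≤ k ∧
    ∀ x, f x = MvPolynomial.eval (fun i => x i) p

/-- a vector field all of whose components are polynomials of degree at most `k`,
i.e. an element of `[P_k]²`. -/
def PolyVecDeg (k : ℕ) (w : V2 → V2) : Prop := ∀ j, PolyDeg k (fun x => w x j)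

/-- the divergence of a vector field on `ℝ²` -/
def divP (w : V2 → V2) (x : V2) : ℝ :=
  ∑ j, fderiv ℝ (fun y => w y j) x (EuclideanSpace.single j 1)

/-- A nondegenerate triangle `T ⊆ ℝ²` with vertices `A 0, A 1, A 2`, barycentric
coordinate functions `lam i` and unit outward normals `nv i` to the edge `e_i`
opposite the vertex `A i` (the edge from `A (i+1)` to `A (i+2)`). -/
structure TriangleData where
  A : Fin 3 → V2
  lam : Fin 3 → V2 → ℝ
  nv : Fin 3 → V2
  indep : AffineIndependent ℝ A
  lam_poly : ∀ i, PolyDeg 1 (lam i)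
  lam_vertex : ∀ i j, lam i (A j) = if i = j then (1 : ℝ) else 0
  lam_sum : ∀ x, ∑ i, lam i x = 1
  nv_unit : ∀ i, ‖nv i‖ = 1
  nv_orth : ∀ i, dot (nv i) (A (i + 2) - A (i + 1)) = 0
  nv_outward : ∀ i, dot (nv i) (A i - A (i + 1)) < 0

namespace TriangleData

variable (T : TriangleData)

/-- the cubic bubble `b = λ₁λ₂λ₃` -/
def bub (x : V2) : ℝ := ∏ i, T.lam i x

/-- affine parametrization of the edge `e_i` (from `A (i+1)` at `t = 0` to
`A (i+2)` at `t = 1`) -/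
def Ept (i : Fin 3) (t : ℝ) : V2 := T.A (i + 1) + t • (T.A (i + 2) - T.A (i + 1))

/-- the unit tangent of the edge `e_i` -/
def tv (i : Fin 3) : V2 := ‖T.A (i + 2) - T.A (i + 1)‖⁻¹ • (T.A (i + 2) - T.A (i + 1))

/-- the midpoint of the edge `e_i` -/
def mid (i : Fin 3) : V2 := midpoint ℝ (T.A (i + 1)) (T.A (i + 2))

/-- the normal derivative `∂_n f` along edge `e_i`, at edge parameter `t` -/
def nder (f : V2 → ℝ) (i : Fin 3) (t : ℝ) : ℝ := fderiv ℝ f (T.Ept i t) (T.nv i)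

/-- membership in `P₂*(T) = {v ∈ [P₂(T)]² : (v·n)|_e ∈ P₁(e) for every edge e}` -/
def memP2star (p : V2 → V2) : Prop :=
  PolyVecDeg 2 p ∧ ∀ i, ∃ a c : ℝ, ∀ t : ℝ, dot (p (T.Ept i t)) (T.nv i) = a * t + c

/-- membership in `W(T) = [P₂(T)]² ⊕ b·P₂*(T)` (the first element) -/
def memW1 (w : V2 → V2) : Prop :=
  ∃ q p, PolyVecDeg 2 q ∧ T.memP2star p ∧ ∀ x, w x = q x + T.bub x • p x

/-- membership in
`P₃*(T) = {w ∈ [P₃(T)]² : ∇·w ∈ P₀(T), (w·n)|_e ∈ P₁(e) for every edge e}` -/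
def memP3star (p : V2 → V2) : Prop :=
  PolyVecDeg 3 p ∧ (∃ c : ℝ, ∀ x, divP p x = c) ∧
    ∀ i, ∃ a c : ℝ, ∀ t : ℝ, dot (p (T.Ept i t)) (T.nv i) = a * t + c

/-- membership in `W(T) = [P₂(T)]² ⊕ b·P₃*(T)` (the second element) -/
def memW2 (w : V2 → V2) : Prop :=
  ∃ q p, PolyVecDeg 2 q ∧ T.memP3star p ∧ ∀ x, w x = q x + T.bub x • p x

/-- vanishing of the 21 degrees of freedom: the values of `w` at the three vertices and
three edge midpoints, the moments `∫_e ∂_n(w·t) dτ`, and the moments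
`∫_e ∂_n(w·n) τ^k dτ`, `k = 0,1`, over each edge. -/
def dofsVanish (w : V2 → V2) : Prop :=
  (∀ i, w (T.A i) = 0) ∧ (∀ i, w (T.mid i) = 0) ∧
    (∀ i, (∫ t in (0 : ℝ)..1, T.nder (fun x => dot (w x) (T.tv i)) i t) = 0) ∧
    (∀ i, ∀ k : Fin 2,
      (∫ t in (0 : ℝ)..1, T.nder (fun x => dot (w x) (T.nv i)) i t * t ^ (k : ℕ)) = 0)

end TriangleData

/-! Write `w = q + b • p` with `q ∈ [P₂(T)]²`. Each barycentric coordinate `λᵢ` is affine and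
vanishes at both ends of the edge `eᵢ`, so `λᵢ`, and with it the bubble `b`, vanishes on `eᵢ`.
Hence `q = w - b • p` vanishes at the vertices and edge midpoints, the six nodes of `P₂`; since
these nodes are unisolvent (an affine change of variables reduces this to the reference
triangle, where it is a 6 × 6 linear system), `q = 0`. So `w = b • p`, which vanishes on `∂T`. -/

namespace MvPolynomial

theorem totalDegree_bind₁_le_of_totalDegree_le_one {σ τ R : Type*} [CommSemiring R]
    {g : σ → MvPolynomial τ R} (hg : ∀ i, (g i).totalDegree ≤ 1) (p : MvPolynomial σ R) :
    (bind₁ g p).totalDegree ≤ p.totalDegree := by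
  conv_lhs => rw [p.as_sum, map_sum]
  refine (totalDegree_finsetSum _ _).trans (Finset.sup_le fun v hv => ?_)
  rw [bind₁_monomial]
  calc (C (p.coeff v) * ∏ i ∈ v.support, g i ^ v i).totalDegree
      ≤ ∑ i ∈ v.support, v i := by
        refine (totalDegree_mul _ _).trans ?_
        rw [totalDegree_C, zero_add]
        refine (totalDegree_finsetProd _ _).trans (Finset.sum_le_sum fun i _ => ?_)
        exact (totalDegree_pow _ _).trans (mul_le_of_le_one_right (Nat.zero_le _) (hg i))
    _ ≤ p.totalDegree := le_totalDegree hv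

end MvPolynomial

open MvPolynomial in
theorem PolyDeg.comp_affine {k : ℕ} {f : V2 → ℝ} (hf : PolyDeg k f) (P D₁ D₂ : V2) :
    PolyDeg k (fun y => f (P + y 0 • D₁ + y 1 • D₂)) := by
  obtain ⟨p, hdeg, hp⟩ := hf
  let g : Fin 2 → MvPolynomial (Fin 2) ℝ := fun i => C (P i) + C (D₁ i) * X 0 + C (D₂ i) * X 1
  have hg : ∀ i, (g i).totalDegree ≤ 1 := fun i => by
    refine (totalDegree_add _ _).trans (max_le ((totalDegree_add _ _).trans (max_le ?_ ?_)) ?_)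
    · simp
    all_goals exact (totalDegree_mul _ _).trans (by simp)
  refine ⟨bind₁ g p, (totalDegree_bind₁_le_of_totalDegree_le_one hg p).trans hdeg, fun y => ?_⟩
  dsimp only
  rw [hp, eval, eval, eval₂Hom_bind₁]
  congr 2
  funext i
  simp [g, mul_comm]

theorem PolyDeg.exists_coeff {k : ℕ} {f : V2 → ℝ} (hf : PolyDeg k f) :
    ∃ c : ℕ → ℕ → ℝ, ∀ x : V2,
      f x = ∑ m ∈ Finset.range (k + 1), ∑ n ∈ Finset.range (k + 1 - m),
        c m n * x 0 ^ m * x 1 ^ n := by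
  obtain ⟨p, hdeg, hp⟩ := hf
  let e : ℕ × ℕ → Fin 2 →₀ ℕ := fun mn => Finsupp.single 0 mn.1 + Finsupp.single 1 mn.2
  refine ⟨fun m n => p.coeff (e (m, n)), fun x => ?_⟩
  have he : ∀ v : Fin 2 →₀ ℕ, e (v 0, v 1) = v := fun v => by
    ext i; fin_cases i <;> simp [e]
  rw [hp, MvPolynomial.eval_eq', Finset.sum_sigma']
  refine Finset.sum_of_injOn (fun v => ⟨v 0, v 1⟩) ?_ ?_ ?_ ?_
  · intro v _ w _ hvw
    simp only [Sigma.mk.injEq] at hvw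
    rw [← he v, ← he w, hvw.1, eq_of_heq hvw.2]
  · intro v hv
    have := (MvPolynomial.le_totalDegree hv).trans hdeg
    rw [Finsupp.sum_fintype _ _ (fun _ => rfl), Fin.sum_univ_two] at this
    simp only [Finset.coe_sigma, Set.mem_sigma_iff, Finset.coe_range, Set.mem_Iio]
    omega
  · rintro ⟨m, n⟩ - hmn
    have : e (m, n) ∉ p.support := fun hmem => hmn ⟨e (m, n), hmem, by simp [e]⟩
    simp only [MvPolynomial.notMem_support_iff.1 this, zero_mul]
  · intro v _
    simp [Fin.prod_univ_two, he, mul_assoc]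

/-- `hₐᵦ` is the hypothesis at the node `(a/2, b/2)` of the reference triangle. -/
theorem PolyDeg.eq_zero_of_vanish_P2_nodes {f : V2 → ℝ} (hf : PolyDeg 2 f)
    (h₀₀ : f !₂[0, 0] = 0) (h₂₀ : f !₂[1, 0] = 0) (h₀₂ : f !₂[0, 1] = 0)
    (h₁₀ : f !₂[1 / 2, 0] = 0) (h₀₁ : f !₂[0, 1 / 2] = 0) (h₁₁ : f !₂[1 / 2, 1 / 2] = 0)
    (x : V2) : f x = 0 := by
  obtain ⟨c, hc⟩ := hf.exists_coeff
  simp only [hc, Finset.sum_range_succ, Finset.range_zero, Finset.sum_empty]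
    at h₀₀ h₂₀ h₀₂ h₁₀ h₀₁ h₁₁ ⊢
  norm_num at h₀₀ h₂₀ h₀₂ h₁₀ h₀₁ h₁₁
  obtain ⟨c₀₀, c₁₀, c₂₀, c₀₁, c₀₂, c₁₁⟩ :
      c 0 0 = 0 ∧ c 1 0 = 0 ∧ c 2 0 = 0 ∧ c 0 1 = 0 ∧ c 0 2 = 0 ∧ c 1 1 = 0 := by
    refine ⟨?_, ?_, ?_, ?_, ?_, ?_⟩ <;> linarith
  simp [c₀₀, c₁₀, c₂₀, c₀₁, c₀₂, c₁₁]

theorem PolyDeg.eq_zero_on_line {f : V2 → ℝ} (hf : PolyDeg 1 f) {P D : V2}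
    (h₀ : f P = 0) (h₁ : f (P + D) = 0) (t : ℝ) : f (P + t • D) = 0 := by
  obtain ⟨c, hc⟩ := (hf.comp_affine P D 0).exists_coeff
  have hline : ∀ s : ℝ, f (P + s • D) = c 0 0 + c 1 0 * s := fun s => by
    simpa [Finset.sum_range_succ] using hc !₂[s, 0]
  have e₀ : c 0 0 = 0 := by simpa [h₀] using (hline 0).symm
  have e₁ : c 1 0 = 0 := by simpa [h₁, e₀] using (hline 1).symm
  rw [hline, e₀, e₁, zero_mul, add_zero]

theorem AffineIndependent.exists_eq_add_smul_add_smul {k V : Type*} [Field k] [AddCommGroup V]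
    [Module k V] [FiniteDimensional k V] (hV : Module.finrank k V = 2) {A : Fin 3 → V}
    (hA : AffineIndependent k A) (x : V) :
    ∃ u v : k, x = A 0 + u • (A 1 - A 0) + v • (A 2 - A 0) := by
  have hspan : affineSpan k (Set.range A) = ⊤ :=
    hA.affineSpan_eq_top_iff_card_eq_finrank_add_one.2 (by simp [hV])
  let b : AffineBasis (Fin 3) k V := ⟨A, hA, hspan⟩
  refine ⟨b.coord 1 x, b.coord 2 x, ?_⟩
  have hsum := b.sum_coord_apply_eq_one x
  have hcomb := b.linear_combination_coord_eq_self x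
  have hbA : ⇑b = A := rfl
  simp only [Fin.sum_univ_three, hbA] at hsum hcomb
  linear_combination (norm := module) -hcomb + hsum • A 0

namespace TriangleData

variable (T : TriangleData)

theorem Ept_zero (i : Fin 3) : T.Ept i 0 = T.A (i + 1) := by
  simp [Ept]

theorem A_eq_Ept (i : Fin 3) : T.A i = T.Ept (i + 2) 0 := by
  rw [Ept_zero, add_assoc, show (2 + 1 : Fin 3) = 0 from rfl, add_zero]

theorem mid_eq_smul_add (i : Fin 3) : T.mid i = (1 / 2 : ℝ) • (T.A (i + 1) + T.A (i + 2)) := by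
  rw [mid, midpoint_eq_smul_add, invOf_eq_inv, one_div]

theorem mid_eq_Ept (i : Fin 3) : T.mid i = T.Ept i (1 / 2) := by
  rw [mid_eq_smul_add, Ept]
  module

theorem lam_Ept_self (i : Fin 3) (t : ℝ) : T.lam i (T.Ept i t) = 0 := by
  have hne : ∀ j : Fin 3, j ≠ j + 1 ∧ j ≠ j + 2 := by decide
  refine (T.lam_poly i).eq_zero_on_line ?_ ?_ t
  · rw [T.lam_vertex, if_neg (hne i).1]
  · rw [add_sub_cancel, T.lam_vertex, if_neg (hne i).2]

theorem bub_Ept (i : Fin 3) (t : ℝ) : T.bub (T.Ept i t) = 0 :=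
  Finset.prod_eq_zero (Finset.mem_univ i) (T.lam_Ept_self i t)

theorem bub_A (i : Fin 3) : T.bub (T.A i) = 0 := by
  rw [A_eq_Ept, bub_Ept]

theorem bub_mid (i : Fin 3) : T.bub (T.mid i) = 0 := by
  rw [mid_eq_Ept, bub_Ept]

theorem eq_zero_of_vanish_P2_nodes {q : V2 → V2} (hq : PolyVecDeg 2 q)
    (hA : ∀ i, q (T.A i) = 0) (hmid : ∀ i, q (T.mid i) = 0) (x : V2) : q x = 0 := by
  obtain ⟨u, v, rfl⟩ := T.indep.exists_eq_add_smul_add_smul (by simp) x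
  ext j
  let φ : V2 → V2 := fun y => T.A 0 + y 0 • (T.A 1 - T.A 0) + y 1 • (T.A 2 - T.A 0)
  have hnode : ∀ y, φ y ∈ Set.range T.A ∪ Set.range T.mid → q (φ y) j = 0 := by
    rintro y (⟨i, hi⟩ | ⟨i, hi⟩) <;> simp [← hi, hA, hmid]
  simpa [φ] using
    ((hq j).comp_affine (T.A 0) (T.A 1 - T.A 0) (T.A 2 - T.A 0)).eq_zero_of_vanish_P2_nodes
      (hnode _ (.inl ⟨0, by simp [φ]⟩)) (hnode _ (.inl ⟨1, by simp [φ]⟩))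
      (hnode _ (.inl ⟨2, by simp [φ]⟩))
      (hnode _ (.inr ⟨2, by simp [φ, mid_eq_smul_add]; module⟩))
      (hnode _ (.inr ⟨1, by simp [φ, mid_eq_smul_add]; module⟩))
      (hnode _ (.inr ⟨0, by simp [φ, mid_eq_smul_add]; module⟩)) !₂[u, v]

end TriangleData

/-- If `w ∈ [P₂(T)]² ⊕ b·P₂*(T)` vanishes at the three vertices and three edge
midpoints of the triangle `T`, then `w` vanishes identically on `∂T`, and hence
`w = b·p` for some `p ∈ P₂*(T)`. -/
theorem stmt10 (T : TriangleData) (w : V2 → V2) (hw : T.memW1 w)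
    (hvert : ∀ i, w (T.A i) = 0) (hmid : ∀ i, w (T.mid i) = 0) :
    (∀ i, ∀ t ∈ Set.Icc (0 : ℝ) 1, w (T.Ept i t) = 0) ∧
      ∃ p, T.memP2star p ∧ ∀ x, w x = T.bub x • p x := by
  obtain ⟨q, p, hq, hp, hwqp⟩ := hw
  have hq0 : ∀ x, q x = 0 := T.eq_zero_of_vanish_P2_nodes hq
    (fun i => by simpa [hwqp, T.bub_A] using hvert i)
    (fun i => by simpa [hwqp, T.bub_mid] using hmid i)
  have hwp : ∀ x, w x = T.bub x • p x := fun x => by rw [hwqp, hq0, zero_add]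
  exact ⟨fun i t _ => by rw [hwp, T.bub_Ept, zero_smul], p, hp, hwp⟩
end
end

section
/- Discrete coercivity: let V_h ⊂ [H₀¹(Ω)]² be a piecewise-H² finite element space satisfying the broken Korn inequality ‖v‖_{H²_h} ≤ C₀(‖∇_h ε(v)‖_{L²} + ‖ε(v)‖_{L²}) and the Poincaré inequality ‖v‖_{L²} ≤ C_p‖∇v‖_{L²}. Then for the broken bilinear form a_h(v,w) = (ℂε(v),ε(w)) + (𝔻∇_h ε(v),∇_h ε(w)) with μ > 0, λ ≥ 0, 0 < ι < 1/√2, there exists C > 0 independent of h and ι such that a_h(v,v) ≥ C(ι²‖v‖²_{H²_h} + ‖v‖²_{H¹}) for all v ∈ V_h. -/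
/-!
The form controls `2μ(ι²‖∇_hε(v)‖² + ‖ε(v)‖²)`. Squaring the broken Korn inequality and using
`ι² < 1/2` on its `‖ε(v)‖²` part bounds `ι²‖v‖²_{H²_h}` by `2C₀²ι²‖∇_hε(v)‖² + C₀²‖ε(v)‖²`,
while Poincaré and the first Korn inequality bound `‖v‖²_{H¹}` by `2(C_p² + 1)‖ε(v)‖²`.
Hence `C = 2μ / (2C₀² + 2C_p² + 2)` works, uniformly in `ι`.
-/

lemma sq_lt_inv_of_lt_one_div_sqrt {x a : ℝ} (hx : 0 ≤ x) (h : x < 1 / √a) : x ^ 2 < a⁻¹ := by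
  rwa [one_div, ← Real.sqrt_inv, Real.lt_sqrt hx] at h

lemma sq_le_two_mul_sq_mul_add_sq {x c a b : ℝ} (hx : 0 ≤ x) (h : x ≤ c * (a + b)) :
    x ^ 2 ≤ 2 * c ^ 2 * (a ^ 2 + b ^ 2) :=
  calc x ^ 2 ≤ (c * (a + b)) ^ 2 := pow_le_pow_left₀ hx h 2
    _ = c ^ 2 * (a + b) ^ 2 := mul_pow c (a + b) 2
    _ ≤ c ^ 2 * (2 * (a ^ 2 + b ^ 2)) := mul_le_mul_of_nonneg_left add_sq_le (sq_nonneg c)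
    _ = 2 * c ^ 2 * (a ^ 2 + b ^ 2) := by ring

lemma two_mul_mul_add_le_strainGradientForm {mu lam iot eps divN gradEps graddiv : ℝ}
    (hlam : 0 ≤ lam) :
    2 * mu * (iot ^ 2 * gradEps ^ 2 + eps ^ 2) ≤
      2 * mu * eps ^ 2 + lam * divN ^ 2 + iot ^ 2 * (2 * mu * gradEps ^ 2 + lam * graddiv ^ 2) := by
  have hdiv : 0 ≤ lam * divN ^ 2 := by positivity
  have hgraddiv : 0 ≤ iot ^ 2 * (lam * graddiv ^ 2) := by positivity
  linarith

lemma brokenH2_sq_add_H1_sq_le {C₀ Cp iot eps gradEps L2 gradN H1 H2h : ℝ}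
    (hiot : iot ^ 2 ≤ 1 / 2) (hL2 : 0 ≤ L2) (hH2h : 0 ≤ H2h)
    (hkorn : H2h ≤ C₀ * (gradEps + eps)) (hpoincare : L2 ≤ Cp * gradN)
    (hkorn₁ : gradN ^ 2 ≤ 2 * eps ^ 2) (hH1 : H1 ^ 2 = L2 ^ 2 + gradN ^ 2) :
    iot ^ 2 * H2h ^ 2 + H1 ^ 2 ≤
      (2 * C₀ ^ 2 + 2 * Cp ^ 2 + 2) * (iot ^ 2 * gradEps ^ 2 + eps ^ 2) := by
  have hH2h_sq : iot ^ 2 * H2h ^ 2 ≤ 2 * C₀ ^ 2 * (iot ^ 2 * gradEps ^ 2) + C₀ ^ 2 * eps ^ 2 := by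
    have hC₀eps : iot ^ 2 * (C₀ ^ 2 * eps ^ 2) ≤ 1 / 2 * (C₀ ^ 2 * eps ^ 2) :=
      mul_le_mul_of_nonneg_right hiot (by positivity)
    linarith [mul_le_mul_of_nonneg_left (sq_le_two_mul_sq_mul_add_sq hH2h hkorn) (sq_nonneg iot)]
  have hL2_sq : L2 ^ 2 ≤ Cp ^ 2 * gradN ^ 2 := by
    simpa only [mul_pow] using pow_le_pow_left₀ hL2 hpoincare 2
  have hH1_sq : H1 ^ 2 ≤ (2 * Cp ^ 2 + 2) * eps ^ 2 := by
    linarith [mul_le_mul_of_nonneg_left hkorn₁ (sq_nonneg Cp)]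
  have hslack : 0 ≤ (2 * Cp ^ 2 + 2) * (iot ^ 2 * gradEps ^ 2) + C₀ ^ 2 * eps ^ 2 := by positivity
  linarith

/-- In the statement `eps = ‖ε(v)‖_{L²}`, `divN = ‖∇·v‖_{L²}`, `gradEps = ‖∇_hε(v)‖_{L²}`,
`graddiv = ‖∇_h(∇·v)‖_{L²}`, `L2 = ‖v‖_{L²}`, `gradN = ‖∇v‖_{L²}`, `H1 = ‖v‖_{H¹}`,
`H2h = ‖v‖_{H²_h}`, `iot = ι` and `ah = a_h(v,v)`. -/
theorem stmt16_general (mu lam C₀ Cp : ℝ) (hmu : 0 < mu) (hlam : 0 ≤ lam) :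
    ∃ C > 0, ∀ iot ah eps divN gradEps graddiv L2 gradN H1 H2h : ℝ,
      0 < iot → iot < 1 / Real.sqrt 2 →
      0 ≤ eps → 0 ≤ divN → 0 ≤ gradEps → 0 ≤ graddiv → 0 ≤ L2 → 0 ≤ gradN →
      0 ≤ H1 → 0 ≤ H2h →
      -- broken H² Korn inequality on V_h
      H2h ≤ C₀ * (gradEps + eps) →
      -- Poincaré inequality
      L2 ≤ Cp * gradN →
      -- first Korn inequality (v ∈ [H₀¹(Ω)]²)
      gradN ^ 2 ≤ 2 * eps ^ 2 →
      -- full H¹ norm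
      H1 ^ 2 = L2 ^ 2 + gradN ^ 2 →
      -- the broken bilinear form
      ah = 2 * mu * eps ^ 2 + lam * divN ^ 2 +
        iot ^ 2 * (2 * mu * gradEps ^ 2 + lam * graddiv ^ 2) →
      C * (iot ^ 2 * H2h ^ 2 + H1 ^ 2) ≤ ah := by
  set K := 2 * C₀ ^ 2 + 2 * Cp ^ 2 + 2
  have hK : 0 < K := by positivity
  refine ⟨2 * mu / K, by positivity, ?_⟩
  intro iot ah eps divN gradEps graddiv L2 gradN H1 H2h hiot hiot_lt _ _ _ _ hL2 _ _ hH2h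
    hkorn hpoincare hkorn₁ hH1 hah
  have hiot_sq : iot ^ 2 ≤ 1 / 2 := by
    simpa only [one_div] using (sq_lt_inv_of_lt_one_div_sqrt hiot.le hiot_lt).le
  calc 2 * mu / K * (iot ^ 2 * H2h ^ 2 + H1 ^ 2)
      ≤ 2 * mu / K * (K * (iot ^ 2 * gradEps ^ 2 + eps ^ 2)) :=
        mul_le_mul_of_nonneg_left
          (brokenH2_sq_add_H1_sq_le hiot_sq hL2 hH2h hkorn hpoincare hkorn₁ hH1) (by positivity)
    _ = 2 * mu * (iot ^ 2 * gradEps ^ 2 + eps ^ 2) := by field_simp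
    _ ≤ ah := hah ▸ two_mul_mul_add_le_strainGradientForm hlam

/-- Discrete coercivity of the broken strain gradient form.  For `v ∈ V_h ⊆ [H₀¹(Ω)]²`
(a piecewise-`H²` finite element space) write `eps = ‖ε(v)‖_{L²}`, `divN = ‖∇·v‖_{L²}`,
`gradEps = ‖∇_hε(v)‖_{L²}`, `graddiv = ‖∇_h(∇·v)‖_{L²}`, `L2 = ‖v‖_{L²}`,
`gradN = ‖∇v‖_{L²}`, `H1 = ‖v‖_{H¹}`, `H2h = ‖v‖_{H²_h}`, so that
`a_h(v,v) = 2μ‖ε(v)‖² + λ‖∇·v‖² + ι²(2μ‖∇_hε(v)‖² + λ‖∇_h(∇·v)‖²)`.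
Assume the broken Korn inequality `‖v‖_{H²_h} ≤ C₀(‖∇_hε(v)‖ + ‖ε(v)‖)`, the Poincaré
inequality `‖v‖_{L²} ≤ C_p‖∇v‖_{L²}`, and (valid since `v ∈ H₀¹`) the first Korn
inequality `‖∇v‖² ≤ 2‖ε(v)‖²`.  Then for `μ > 0`, `λ ≥ 0`, `0 < ι < 1/√2` there is
`C > 0` independent of `h` and `ι` with `a_h(v,v) ≥ C(ι²‖v‖²_{H²_h} + ‖v‖²_{H¹})`. -/
theorem stmt16 (mu lam C₀ Cp : ℝ) (hmu : 0 < mu) (hlam : 0 ≤ lam)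
    (hC₀ : 0 < C₀) (hCp : 0 < Cp) :
    ∃ C > 0, ∀ iot ah eps divN gradEps graddiv L2 gradN H1 H2h : ℝ,
      0 < iot → iot < 1 / Real.sqrt 2 →
      0 ≤ eps → 0 ≤ divN → 0 ≤ gradEps → 0 ≤ graddiv → 0 ≤ L2 → 0 ≤ gradN →
      0 ≤ H1 → 0 ≤ H2h →
      -- broken H² Korn inequality on V_h
      H2h ≤ C₀ * (gradEps + eps) →
      -- Poincaré inequality
      L2 ≤ Cp * gradN →
      -- first Korn inequality (v ∈ [H₀¹(Ω)]²)
      gradN ^ 2 ≤ 2 * eps ^ 2 →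
      -- full H¹ norm
      H1 ^ 2 = L2 ^ 2 + gradN ^ 2 →
      -- the broken bilinear form
      ah = 2 * mu * eps ^ 2 + lam * divN ^ 2 +
        iot ^ 2 * (2 * mu * gradEps ^ 2 + lam * graddiv ^ 2) →
      C * (iot ^ 2 * H2h ^ 2 + H1 ^ 2) ≤ ah :=
  stmt16_general mu lam C₀ Cp hmu hlam
end
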